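/- arXiv:0906.3380 — 3 statements merged into one kernel-verified Lean document; each statement's English description precedes it below -/
import Mathlib

section
/- If m is a positive integer such that φ(rad(m)) divides m, then m is a value of Euler's totient function; specifically m = φ(m·rad(m)/φ(rad(m))). -/
/-- The radical of `m`: the product of the distinct prime factors of `m`. -/
def rad (m : ℕ) : ℕ := ∏ p ∈ m.primeFactors, p

/-!
Euler's product formula reads `φ n · rad n = n · φ (rad n)`, and `rad n` only depends on the set of
prime factors of `n`. Writing `m = k · φ (rad m)`, the number `k · rad m` has the same prime factors
as `m` (because `k ∣ m`), so `φ (k · rad m) = k · φ (rad m) = m`.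
-/

open Nat

lemma primeFactors_rad (m : ℕ) : (rad m).primeFactors = m.primeFactors :=
  primeFactors_prod_primeFactors m

lemma rad_pos (m : ℕ) : 0 < rad m :=
  Finset.prod_pos fun _ hp ↦ pos_of_mem_primeFactors hp

lemma rad_eq_of_primeFactors_eq {a b : ℕ} (h : a.primeFactors = b.primeFactors) : rad a = rad b := by
  rw [rad, rad, h]

lemma totient_rad (m : ℕ) : φ (rad m) = ∏ p ∈ m.primeFactors, (p - 1) := by
  have h := totient_mul_prod_primeFactors (rad m)
  rw [primeFactors_rad, ← rad, mul_comm (rad m)] at h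
  exact Nat.eq_of_mul_eq_mul_right (rad_pos m) h

lemma totient_mul_rad (n : ℕ) : φ n * rad n = n * φ (rad n) := by
  rw [totient_rad]
  exact totient_mul_prod_primeFactors n

lemma totient_mul_rad_of_primeFactors_subset {k m : ℕ} (h : k.primeFactors ⊆ m.primeFactors) :
    φ (k * rad m) = k * φ (rad m) := by
  rcases eq_or_ne k 0 with rfl | hk
  · simp
  have hprime : (k * rad m).primeFactors = m.primeFactors := by
    rw [primeFactors_mul hk (rad_pos m).ne', primeFactors_rad, Finset.union_eq_right.2 h]
  have euler := totient_mul_rad (k * rad m)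
  rw [rad_eq_of_primeFactors_eq hprime] at euler
  apply Nat.eq_of_mul_eq_mul_right (rad_pos m)
  rw [euler]
  ring

lemma primeFactors_div_subset_of_dvd {d m : ℕ} (h : d ∣ m) :
    (m / d).primeFactors ⊆ m.primeFactors := by
  rcases eq_or_ne m 0 with rfl | hm
  · simp
  exact primeFactors_mono (Nat.div_dvd_of_dvd h) hm

theorem totient_rad_dvd_imp_totient_value_general (m : ℕ)
    (h : Nat.totient (rad m) ∣ m) :
    m = Nat.totient (m * rad m / Nat.totient (rad m)) := by
  rw [← Nat.div_mul_right_comm h, totient_mul_rad_of_primeFactors_subset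
    (primeFactors_div_subset_of_dvd h), Nat.div_mul_cancel h]

theorem totient_rad_dvd_imp_totient_value (m : ℕ) (hm : 0 < m)
    (h : Nat.totient (rad m) ∣ m) :
    m = Nat.totient (m * rad m / Nat.totient (rad m)) :=
  totient_rad_dvd_imp_totient_value_general m h
end

section
/- Define a prime chain starting at a prime q as a finite sequence of primes t_0 = q, t_1, ..., t_k with t_{j+1} ≡ 1 (mod t_j) for each j. A prime t belongs to a prime chain for q if and only if t = q or q divides φ_j(t) for some j ≥ 1, where φ_j is the j-fold iterate of Euler's function. -/
/-!
A chain step `p → t` (with `t ≡ 1 [MOD p]`) means `p ∣ φ t`, and `φ` preserves divisibility,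
so along a chain of length `k ≥ 1` ending at `t` we get `q ∣ φ^[k] t`. Conversely, every prime
factor of `φ n` is either a prime factor `p` of `n` or divides `p - 1` for one, so descending
from `q ∣ φ^[j] n` one finds a prime factor of `n` lying on a prime chain for `q`.
-/

/-- `InPrimeChain q t` means there is a finite sequence of primes
`t_0 = q, t_1, ..., t_k = t` with `t_{j+1} ≡ 1 (mod t_j)` for each `j`. -/
def InPrimeChain (q t : ℕ) : Prop :=
  ∃ (k : ℕ) (f : ℕ → ℕ), f 0 = q ∧ f k = t ∧ (∀ j ≤ k, (f j).Prime) ∧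
    ∀ j < k, f (j + 1) ≡ 1 [MOD f j]

open Nat

theorem Nat.iterate_totient_dvd_iterate_totient (i : ℕ) {a b : ℕ} (h : a ∣ b) :
    φ^[i] a ∣ φ^[i] b := by
  induction i with
  | zero => exact h
  | succ i ih =>
    rw [Function.iterate_succ_apply', Function.iterate_succ_apply']
    exact totient_dvd_of_dvd ih

theorem Nat.Prime.modEq_one_iff_dvd_totient {p t : ℕ} (ht : t.Prime) :
    t ≡ 1 [MOD p] ↔ p ∣ φ t := by
  rw [totient_prime ht, ← modEq_iff_dvd' ht.one_le]
  exact ⟨Nat.ModEq.symm, Nat.ModEq.symm⟩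

theorem Nat.Prime.exists_prime_dvd_of_dvd_totient {r n : ℕ} (hr : r.Prime) (h : r ∣ φ n) :
    ∃ p, p.Prime ∧ p ∣ n ∧ (r = p ∨ r ∣ p - 1) := by
  rcases eq_or_ne n 0 with rfl | hn
  · exact ⟨r, hr, dvd_zero r, Or.inl rfl⟩
  rw [totient_eq_prod_factorization hn, Finsupp.prod] at h
  obtain ⟨p, hp, hdvd⟩ := (hr.prime.dvd_finsetProd_iff _).mp h
  rw [support_factorization] at hp
  have hp_prime := prime_of_mem_primeFactors hp
  refine ⟨p, hp_prime, dvd_of_mem_primeFactors hp, ?_⟩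
  rcases hr.prime.dvd_or_dvd hdvd with hpow | hsub
  · exact Or.inl ((prime_dvd_prime_iff_eq hr hp_prime).mp (hr.dvd_of_dvd_pow hpow))
  · exact Or.inr hsub

namespace InPrimeChain

variable {q p t : ℕ}

theorem refl (hq : q.Prime) : InPrimeChain q q :=
  ⟨0, fun _ => q, rfl, rfl, fun _ _ => hq, fun _ h => absurd h (Nat.not_lt_zero _)⟩

theorem extend (h : InPrimeChain q p) (ht : t.Prime) (hmod : t ≡ 1 [MOD p]) :
    InPrimeChain q t := by
  obtain ⟨k, f, h0, hk, hprime, hstep⟩ := h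
  refine ⟨k + 1, fun n => if n ≤ k then f n else t, by simp [h0], by simp, ?_, ?_⟩
  · intro j hj
    by_cases hjk : j ≤ k
    · simpa [hjk] using hprime j hjk
    · simpa [hjk] using ht
  · intro j hj
    rcases (Nat.lt_succ_iff.mp hj).lt_or_eq with hjk | rfl
    · simpa [hjk.le, Nat.succ_le_of_lt hjk] using hstep j hjk
    · simpa [hk] using hmod

theorem induction_on {motive : ℕ → Prop} (h : InPrimeChain q t) (base : motive q)
    (step : ∀ p t, t.Prime → t ≡ 1 [MOD p] → motive p → motive t) : motive t := by
  obtain ⟨k, f, h0, rfl, hprime, hstep⟩ := h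
  induction k with
  | zero => exact h0 ▸ base
  | succ k ih =>
    exact step _ _ (hprime _ le_rfl) (hstep k k.lt_succ_self)
      (ih (fun j hj => hprime j (hj.trans k.le_succ)) fun j hj => hstep j (hj.trans k.lt_succ_self))

end InPrimeChain

theorem exists_prime_dvd_inPrimeChain_of_dvd_iterate_totient {q : ℕ} (hq : q.Prime) (j : ℕ) :
    ∀ {n}, q ∣ φ^[j] n → ∃ p, p.Prime ∧ p ∣ n ∧ InPrimeChain q p := by
  induction j with
  | zero => exact fun h => ⟨q, hq, h, InPrimeChain.refl hq⟩
  | succ j ih =>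
    intro n h
    obtain ⟨r, hr, hr_dvd, hr_chain⟩ := ih (Function.iterate_succ_apply φ j n ▸ h)
    obtain ⟨p, hp, hp_dvd, rfl | hrp⟩ := hr.exists_prime_dvd_of_dvd_totient hr_dvd
    · exact ⟨r, hp, hp_dvd, hr_chain⟩
    · exact ⟨p, hp, hp_dvd, hr_chain.extend hp ((modEq_iff_dvd' hp.one_le).mpr hrp).symm⟩

theorem inPrimeChain_iff_iterate_totient (q t : ℕ) (hq : q.Prime) (ht : t.Prime) :
    InPrimeChain q t ↔ t = q ∨ ∃ j : ℕ, 1 ≤ j ∧ q ∣ Nat.totient^[j] t := by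
  constructor
  · intro h
    refine h.induction_on (motive := fun t => t = q ∨ ∃ j, 1 ≤ j ∧ q ∣ φ^[j] t)
      (Or.inl rfl) fun p t ht hmod hp => Or.inr ?_
    have hp_dvd : p ∣ φ t := (ht.modEq_one_iff_dvd_totient).mp hmod
    rcases hp with rfl | ⟨j, hj, hq_dvd⟩
    · exact ⟨1, le_rfl, hp_dvd⟩
    · refine ⟨j + 1, Nat.le_add_left 1 j, ?_⟩
      rw [Function.iterate_succ_apply]
      exact hq_dvd.trans (iterate_totient_dvd_iterate_totient j hp_dvd)
  · rintro (rfl | ⟨j, hj, hq_dvd⟩)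
    · exact InPrimeChain.refl ht
    · obtain ⟨i, rfl⟩ := Nat.exists_eq_add_of_le' hj
      obtain ⟨p, -, hp_dvd, hp_chain⟩ :=
        exists_prime_dvd_inPrimeChain_of_dvd_iterate_totient hq i
          (Function.iterate_succ_apply φ i t ▸ hq_dvd)
      exact hp_chain.extend ht ((ht.modEq_one_iff_dvd_totient).mpr hp_dvd)
end

section
/- For every positive integer k, the equation φ(x) = k! has a solution; that is, k! is always a value of Euler's totient function. -/
/-!
If `Q = ∏_{p ∣ n} (p - 1)` divides `n`, then `x = (n / Q) · ∏_{p ∣ n} p` has the same prime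
factors as `n`, so `φ x = x · ∏_{p ∣ n} (1 - 1/p) = n`. For `n = k!` the numbers `p - 1`, `p ≤ k`
prime, are distinct elements of `{1, …, k}`, so their product divides `k!`.
-/

open Finset Nat

theorem Nat.exists_totient_eq_of_prod_primeFactors_sub_one_dvd {n : ℕ}
    (h : ∏ p ∈ n.primeFactors, (p - 1) ∣ n) : ∃ x, φ x = n := by
  rcases eq_or_ne n 0 with rfl | hn
  · exact ⟨0, totient_zero⟩
  set R := ∏ p ∈ n.primeFactors, p
  set Q := ∏ p ∈ n.primeFactors, (p - 1)
  have hR : 0 < R := prod_pos fun _ hp ↦ pos_of_mem_primeFactors hp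
  have hnQ : n / Q ≠ 0 := (Nat.div_pos (le_of_dvd (pos_of_ne_zero hn) h)
    (pos_of_dvd_of_pos h (pos_of_ne_zero hn))).ne'
  have hx : (n / Q * R).primeFactors = n.primeFactors := by
    rw [primeFactors_mul hnQ hR.ne', primeFactors_prod_primeFactors]
    exact union_eq_right.2 (primeFactors_mono (div_dvd_of_dvd h) hn)
  refine ⟨n / Q * R, ?_⟩
  rw [totient_eq_div_primeFactors_mul, hx, Nat.mul_div_cancel _ hR, Nat.div_mul_cancel h]

theorem Nat.prod_dvd_factorial {s : Finset ℕ} {k : ℕ} (hs : s ⊆ Icc 1 k) : ∏ i ∈ s, i ∣ k ! := by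
  rw [← prod_Ico_id_eq_factorial]
  exact prod_dvd_prod_of_subset _ _ _ fun i hi ↦ by grind

theorem Nat.primeFactors_factorial (k : ℕ) : (k !).primeFactors = primesLE k := by
  ext p
  simp only [mem_primeFactors, mem_primesLE]
  constructor
  · rintro ⟨hp, hdvd, -⟩
    exact ⟨hp.dvd_factorial.1 hdvd, hp⟩
  · rintro ⟨hle, hp⟩
    exact ⟨hp, hp.dvd_factorial.2 hle, factorial_ne_zero k⟩

theorem Nat.prod_primeFactors_factorial_sub_one_dvd (k : ℕ) :
    ∏ p ∈ (k !).primeFactors, (p - 1) ∣ k ! := by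
  have hinj : Set.InjOn (· - 1) (primesLE k : Set ℕ) := fun p hp q hq hpq ↦ by
    grind [one_lt_of_mem_primesLE hp, one_lt_of_mem_primesLE hq]
  rw [primeFactors_factorial]
  calc ∏ p ∈ primesLE k, (p - 1) = ∏ i ∈ (primesLE k).image (· - 1), i :=
        (prod_image (f := id) hinj).symm
    _ ∣ k ! := prod_dvd_factorial fun i hi ↦ by
      obtain ⟨p, hp, rfl⟩ := mem_image.1 hi
      grind [one_lt_of_mem_primesLE hp, le_of_mem_primesLE hp]

theorem totient_eq_factorial_general (k : ℕ) :
    ∃ x : ℕ, Nat.totient x = Nat.factorial k :=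
  exists_totient_eq_of_prod_primeFactors_sub_one_dvd (prod_primeFactors_factorial_sub_one_dvd k)

theorem totient_eq_factorial (k : ℕ) (hk : 0 < k) :
    ∃ x : ℕ, Nat.totient x = Nat.factorial k :=
  totient_eq_factorial_general k
end
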